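/- arXiv:2204.09416 — 3 statements merged into one kernel-verified Lean document; each statement's English description precedes it below -/
import Mathlib

section
/- If z = √R ẑ (‖ẑ‖=1, R>0) is a critical point of F, then [(1/m) Σ_j (a_j^T ẑ)^2 (a_j^T x)^2] · [(1/m) Σ_j (a_j^T x)(a_j^T ẑ)^3] = [(1/m) Σ_j (a_j^T ẑ)^4] · [(1/m) Σ_j (a_j^T ẑ)(a_j^T x)^3], provided (1/m) Σ_j (a_j^T ẑ)^4 > 0. -/
/-- At a critical point `z = √R ẑ` (`‖ẑ‖ = 1`, `R > 0`) of the phase retrieval loss,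
`[(1/m) ∑ⱼ (aⱼᵀẑ)²(aⱼᵀx)²] ⬝ [(1/m) ∑ⱼ (aⱼᵀx)(aⱼᵀẑ)³]
  = [(1/m) ∑ⱼ (aⱼᵀẑ)⁴] ⬝ [(1/m) ∑ⱼ (aⱼᵀẑ)(aⱼᵀx)³]`,
provided `(1/m) ∑ⱼ (aⱼᵀẑ)⁴ > 0`. -/
theorem critical_point_fundamental_relation (n m : ℕ) (a : Fin m → Fin n → ℝ)
    (x zh : Fin n → ℝ) (R : ℝ) (hR : 0 < R)
    (hzh : ∑ i, (zh i) ^ 2 = 1)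
    (z : Fin n → ℝ) (hz : z = fun i => Real.sqrt R * zh i)
    (hcritz : ∑ k, ((2 / (m : ℝ)) * ∑ j,
        ((∑ i, a j i * z i) ^ 2 - (∑ i, a j i * x i) ^ 2)
          * (∑ i, a j i * z i) * a j k) * z k = 0)
    (hcritx : ∑ k, ((2 / (m : ℝ)) * ∑ j,
        ((∑ i, a j i * z i) ^ 2 - (∑ i, a j i * x i) ^ 2)
          * (∑ i, a j i * z i) * a j k) * x k = 0)
    (hA : 0 < (1 / (m : ℝ)) * ∑ j, (∑ i, a j i * zh i) ^ 4) :
    ((1 / (m : ℝ)) * ∑ j, (∑ i, a j i * zh i) ^ 2 * (∑ i, a j i * x i) ^ 2)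
        * ((1 / (m : ℝ)) * ∑ j, (∑ i, a j i * x i) * (∑ i, a j i * zh i) ^ 3)
      = ((1 / (m : ℝ)) * ∑ j, (∑ i, a j i * zh i) ^ 4)
        * ((1 / (m : ℝ)) * ∑ j, (∑ i, a j i * zh i) * (∑ i, a j i * x i) ^ 3) := by
  set s := Real.sqrt R with hsdef
  have hs2 : s ^ 2 = R := Real.sq_sqrt hR.le
  have hs0 : s ≠ 0 := by
    have := Real.sqrt_pos.mpr hR
    exact ne_of_gt this
  have hm : (m : ℝ) ≠ 0 := by
    intro h
    rw [h] at hA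
    simp at hA
  -- abbreviations
  set u : Fin m → ℝ := fun j => ∑ i, a j i * zh i with hu
  set v : Fin m → ℝ := fun j => ∑ i, a j i * x i with hv
  have haz : ∀ j, (∑ i, a j i * z i) = s * u j := by
    intro j
    rw [hz, hu]
    simp only
    rw [Finset.mul_sum]
    apply Finset.sum_congr rfl
    intros; ring
  -- swap sums lemma
  have hswap : ∀ (w : Fin n → ℝ), ∑ k, ((2 / (m : ℝ)) * ∑ j,
        ((∑ i, a j i * z i) ^ 2 - (∑ i, a j i * x i) ^ 2)
          * (∑ i, a j i * z i) * a j k) * w k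
      = (2 / (m : ℝ)) * ∑ j, ((s * u j) ^ 2 - v j ^ 2) * (s * u j)
          * (∑ k, a j k * w k) := by
    intro w
    simp only [haz]
    rw [Finset.mul_sum]
    rw [show ∀ f : Fin m → ℝ, (∑ j, (2 / (m:ℝ)) * f j) = ∑ k : Fin m, (2/(m:ℝ)) * f k from fun f => rfl]
    simp only [Finset.sum_mul, Finset.mul_sum]
    rw [Finset.sum_comm]
    apply Finset.sum_congr rfl
    intro j _
    apply Finset.sum_congr rfl
    intro k _
    ring
  have hsz : ∀ j, (∑ k, a j k * z k) = s * u j := haz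
  have E1 : R * (∑ j, u j ^ 4) = ∑ j, u j ^ 2 * v j ^ 2 := by
    have h := hcritz
    rw [hswap z] at h
    simp only [hsz] at h
    have h2 : ∑ j, ((s * u j) ^ 2 - v j ^ 2) * (s * u j) * (s * u j)
        = s ^ 2 * ∑ j, (R * u j ^ 2 - v j ^ 2) * u j ^ 2 := by
      rw [Finset.mul_sum]
      apply Finset.sum_congr rfl
      intro j _
      rw [← hs2]; ring
    rw [h2] at h
    have h3 : ∑ j, (R * u j ^ 2 - v j ^ 2) * u j ^ 2 = 0 := by
      have hne : (2 / (m:ℝ)) * s ^ 2 ≠ 0 := by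
        apply mul_ne_zero
        · exact div_ne_zero two_ne_zero hm
        · exact pow_ne_zero 2 hs0
      rw [← mul_assoc] at h
      exact (mul_eq_zero.mp h).resolve_left hne
    have : ∑ j, (R * u j ^ 2 - v j ^ 2) * u j ^ 2
        = R * (∑ j, u j ^ 4) - ∑ j, u j ^ 2 * v j ^ 2 := by
      rw [Finset.mul_sum, ← Finset.sum_sub_distrib]
      apply Finset.sum_congr rfl
      intros; ring
    linarith [this ▸ h3]
  have E2 : R * (∑ j, u j ^ 3 * v j) = ∑ j, u j * v j ^ 3 := by
    have h := hcritx
    rw [hswap x] at h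
    have hsx : ∀ j, (∑ k, a j k * x k) = v j := fun j => rfl
    simp only [hsx] at h
    have h2 : ∑ j, ((s * u j) ^ 2 - v j ^ 2) * (s * u j) * v j
        = s * ∑ j, (R * u j ^ 2 - v j ^ 2) * (u j * v j) := by
      rw [Finset.mul_sum]
      apply Finset.sum_congr rfl
      intro j _
      rw [← hs2]; ring
    rw [h2] at h
    have h3 : ∑ j, (R * u j ^ 2 - v j ^ 2) * (u j * v j) = 0 := by
      have hne : (2 / (m:ℝ)) * s ≠ 0 :=
        mul_ne_zero (div_ne_zero two_ne_zero hm) hs0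
      rw [← mul_assoc] at h
      exact (mul_eq_zero.mp h).resolve_left hne
    have : ∑ j, (R * u j ^ 2 - v j ^ 2) * (u j * v j)
        = R * (∑ j, u j ^ 3 * v j) - ∑ j, u j * v j ^ 3 := by
      rw [Finset.mul_sum, ← Finset.sum_sub_distrib]
      apply Finset.sum_congr rfl
      intros; ring
    linarith [this ▸ h3]
  have g1 : (∑ j, u j * v j ^ 3) = ∑ j, (∑ i, a j i * zh i) * (∑ i, a j i * x i) ^ 3 := rfl
  have g2 : (∑ j, u j ^ 3 * v j) = ∑ j, (∑ i, a j i * x i) * (∑ i, a j i * zh i) ^ 3 := by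
    apply Finset.sum_congr rfl; intros; ring
  rw [← g1, ← g2, show (∑ j, (∑ i, a j i * zh i) ^ 2 * (∑ i, a j i * x i) ^ 2) = ∑ j, u j ^ 2 * v j ^ 2 from rfl,
     show (∑ j, (∑ i, a j i * zh i) ^ 4) = ∑ j, u j ^ 4 from rfl]
  rw [← E1, ← E2]
  ring
end

section
/- At any critical point z = √R ẑ of F with (1/m) Σ_j (a_j^T ẑ)^4 > 0, the directional Hessian along x satisfies: (1/4) x^T ∇²F(z) x · (1/m) Σ_j (a_j^T ẑ)^4 = 3 [(1/m) Σ_j (a_j^T ẑ)^2 (a_j^T x)^2]^2 − [(1/m) Σ_j (a_j^T ẑ)^4] · [(1/m) Σ_j (a_j^T x)^4]. -/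
/-- At any critical point `z = √R ẑ` of the phase retrieval loss with
`(1/m) ∑ⱼ (aⱼᵀẑ)⁴ > 0`, the directional Hessian along `x` satisfies
`(1/4) xᵀ∇²F(z)x ⬝ (1/m)∑ⱼ(aⱼᵀẑ)⁴ = 3[(1/m)∑ⱼ(aⱼᵀẑ)²(aⱼᵀx)²]²
  − [(1/m)∑ⱼ(aⱼᵀẑ)⁴]⬝[(1/m)∑ⱼ(aⱼᵀx)⁴]`. -/
theorem critical_point_hessian_identity (n m : ℕ) (a : Fin m → Fin n → ℝ)
    (x zh : Fin n → ℝ) (R : ℝ) (hR : 0 < R)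
    (hzh : ∑ i, (zh i) ^ 2 = 1)
    (z : Fin n → ℝ) (hz : z = fun i => Real.sqrt R * zh i)
    (hcrit : ∀ k, (2 / (m : ℝ)) * ∑ j,
        ((∑ i, a j i * z i) ^ 2 - (∑ i, a j i * x i) ^ 2)
          * (∑ i, a j i * z i) * a j k = 0)
    (hA : 0 < (1 / (m : ℝ)) * ∑ j, (∑ i, a j i * zh i) ^ 4) :
    (1 / 4) * ((4 / (m : ℝ)) * ∑ j, (∑ i, a j i * x i) ^ 2 *
          (3 * (∑ i, a j i * z i) ^ 2 - (∑ i, a j i * x i) ^ 2))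
        * ((1 / (m : ℝ)) * ∑ j, (∑ i, a j i * zh i) ^ 4)
      = 3 * ((1 / (m : ℝ)) * ∑ j, (∑ i, a j i * zh i) ^ 2 * (∑ i, a j i * x i) ^ 2) ^ 2
        - ((1 / (m : ℝ)) * ∑ j, (∑ i, a j i * zh i) ^ 4)
          * ((1 / (m : ℝ)) * ∑ j, (∑ i, a j i * x i) ^ 4) := by
  -- notation
  set P : Fin m → ℝ := fun j => ∑ i, a j i * zh i with hP
  set Q : Fin m → ℝ := fun j => ∑ i, a j i * x i with hQ
  have hs : Real.sqrt R ^ 2 = R := Real.sq_sqrt hR.le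
  have hm : (m : ℝ) ≠ 0 := by
    intro h
    rw [h] at hA
    simp at hA
  have haz : ∀ j, (∑ i, a j i * z i) = Real.sqrt R * P j := by
    intro j
    rw [hP, Finset.mul_sum]
    refine Finset.sum_congr rfl fun i _ => ?_
    rw [hz]; ring
  -- dot the criticality condition with z
  have hcrit' : ∀ k, (∑ j,
      ((∑ i, a j i * z i) ^ 2 - (∑ i, a j i * x i) ^ 2)
        * (∑ i, a j i * z i) * a j k) = 0 := by
    intro k
    have h := hcrit k
    have h2 : (2 / (m : ℝ)) ≠ 0 := by
      simp [hm]
    exact (mul_eq_zero.mp h).resolve_left h2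
  have key : ∑ j, ((∑ i, a j i * z i) ^ 2 - (∑ i, a j i * x i) ^ 2)
      * (∑ i, a j i * z i) ^ 2 = 0 := by
    have swap : ∑ k, (∑ j, ((∑ i, a j i * z i) ^ 2 - (∑ i, a j i * x i) ^ 2)
          * (∑ i, a j i * z i) * a j k) * z k
        = ∑ j, ∑ k, ((∑ i, a j i * z i) ^ 2 - (∑ i, a j i * x i) ^ 2)
          * (∑ i, a j i * z i) * a j k * z k := by
      simp_rw [Finset.sum_mul]
      exact Finset.sum_comm

    have collapse : ∀ j, ∑ k, ((∑ i, a j i * z i) ^ 2 - (∑ i, a j i * x i) ^ 2)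
          * (∑ i, a j i * z i) * a j k * z k
        = ((∑ i, a j i * z i) ^ 2 - (∑ i, a j i * x i) ^ 2)
          * (∑ i, a j i * z i) ^ 2 := by
      intro j
      set C := ((∑ i, a j i * z i) ^ 2 - (∑ i, a j i * x i) ^ 2)
        * (∑ i, a j i * z i) with hC
      calc ∑ k, C * a j k * z k = C * ∑ k, a j k * z k := by
            rw [Finset.mul_sum]
            exact Finset.sum_congr rfl fun k _ => by ring
        _ = ((∑ i, a j i * z i) ^ 2 - (∑ i, a j i * x i) ^ 2)
            * (∑ i, a j i * z i) ^ 2 := by rw [hC]; ring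
    have lhs0 : ∑ k, (∑ j, ((∑ i, a j i * z i) ^ 2 - (∑ i, a j i * x i) ^ 2)
          * (∑ i, a j i * z i) * a j k) * z k = 0 :=
      Finset.sum_eq_zero fun k _ => by rw [hcrit' k, zero_mul]
    rw [swap] at lhs0
    rw [← lhs0]
    exact Finset.sum_congr rfl fun j _ => (collapse j).symm
  -- key in terms of P, Q
  have key2 : R * R * (∑ j, P j ^ 4) - R * (∑ j, P j ^ 2 * Q j ^ 2) = 0 := by
    have : ∑ j, ((∑ i, a j i * z i) ^ 2 - (∑ i, a j i * x i) ^ 2)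
        * (∑ i, a j i * z i) ^ 2
        = ∑ j, (R * R * P j ^ 4 - R * (P j ^ 2 * Q j ^ 2)) := by
      refine Finset.sum_congr rfl fun j _ => ?_
      rw [haz j, hQ]
      linear_combination ((Real.sqrt R ^ 2 + R) * P j ^ 4 - P j ^ 2
        * (∑ i, a j i * x i) ^ 2) * hs
    rw [this] at key
    rw [← key, Finset.sum_sub_distrib, Finset.mul_sum, Finset.mul_sum]
  have hkey : R * (∑ j, P j ^ 4) = ∑ j, P j ^ 2 * Q j ^ 2 := by
    have h := sub_eq_zero.mp key2
    exact mul_left_cancel₀ hR.ne' (by linear_combination h)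
  -- rewrite the Hessian sum
  have e1 : ∑ j, (∑ i, a j i * x i) ^ 2 *
      (3 * (∑ i, a j i * z i) ^ 2 - (∑ i, a j i * x i) ^ 2)
      = 3 * R * (∑ j, P j ^ 2 * Q j ^ 2) - ∑ j, Q j ^ 4 := by
    rw [Finset.mul_sum, ← Finset.sum_sub_distrib]
    refine Finset.sum_congr rfl fun j _ => ?_
    rw [haz j, hQ]
    linear_combination 3 * (∑ i, a j i * x i) ^ 2 * P j ^ 2 * hs
  rw [e1]
  have hS4 : ∑ j, (∑ i, a j i * zh i) ^ 4 = ∑ j, P j ^ 4 := rfl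
  have hS22 : ∑ j, (∑ i, a j i * zh i) ^ 2 * (∑ i, a j i * x i) ^ 2
      = ∑ j, P j ^ 2 * Q j ^ 2 := rfl
  have hS0 : ∑ j, (∑ i, a j i * x i) ^ 4 = ∑ j, Q j ^ 4 := rfl
  rw [hS4, hS22, hS0]
  linear_combination (3 / (m : ℝ) ^ 2) * (∑ j, P j ^ 2 * Q j ^ 2) * hkey
end

section
/- For any z with dist(z, x) ≤ δ₀ ≤ 1/4 and ‖x‖ = 1, writing z = √R ẑ with ‖ẑ‖ = 1 and ⟨ẑ, x⟩ ≥ 0, one has |√R − 1| ≤ δ₀ and ‖z + x‖ ≤ 2 + δ₀; consequently if for all unit u, (1/m)Σ_j(a_j^T u)²(a_j^T z)² ≥ R(1 + 2(u^T ẑ)² − 2ε) and (1/m)Σ_j(a_j^T u)²(a_j^T x)² ≤ 1 + 2(u^T x)² + ε, then (1/4) u^T ∇²F(z) u ≥ 3(1−δ₀)² − 1 − 6((1+δ₀)² + 1)ε − (2+δ₀)δ₀ for all unit u. -/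
lemma scv_aux1 (s δ₀ : ℝ) (h1 : 1 - δ₀ ≤ s) (h2 : 0 ≤ 1 - δ₀) :
    3 * (1 - δ₀) ^ 2 ≤ 3 * s ^ 2 := by nlinarith

lemma scv_aux2 (s δ₀ : ℝ) (h0 : 0 ≤ s) (h1 : s ≤ 1 + δ₀) : s ^ 2 ≤ (1 + δ₀) ^ 2 := by
  nlinarith

lemma scv_aux3 (s τ w δ₀ : ℝ) (h1 : (w - s * τ) ^ 2 ≤ δ₀ ^ 2) (h2 : 0 ≤ δ₀)
    (h3 : δ₀ ≤ 1) : 6 * (s ^ 2 * τ ^ 2) - 2 * w ^ 2 ≥ -(2 * δ₀ + δ₀ ^ 2) := by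
  nlinarith [sq_nonneg (3 * (s * τ) - w), mul_nonneg h2 (sub_nonneg.mpr h3)]

/-- For `z` with `dist(z,x) ≤ δ₀ ≤ 1/4`, `‖x‖ = 1`, `z = √R ẑ` with `‖ẑ‖ = 1` and
`⟨ẑ,x⟩ ≥ 0`, we have `|√R − 1| ≤ δ₀` and `‖z + x‖ ≤ 2 + δ₀`; consequently, under
the stated uniform lower/upper bounds, the directional Hessian satisfies
`(1/4) uᵀ∇²F(z)u ≥ 3(1−δ₀)² − 1 − 6((1+δ₀)²+1)ε − (2+δ₀)δ₀` for all unit `u`. -/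
theorem strong_convexity_near_solution (n m : ℕ) (a : Fin m → Fin n → ℝ)
    (x zh : Fin n → ℝ) (R δ₀ ε : ℝ)
    (hδ : 0 < δ₀) (hδ' : δ₀ ≤ 1 / 4) (hε : 0 ≤ ε)
    (hx : ∑ i, (x i) ^ 2 = 1) (hzh : ∑ i, (zh i) ^ 2 = 1) (hR : 0 ≤ R)
    (z : Fin n → ℝ) (hz : z = fun i => Real.sqrt R * zh i)
    (hσ : 0 ≤ ∑ i, zh i * x i)
    (hdist : Real.sqrt (∑ i, (z i - x i) ^ 2) ≤ δ₀) :
    |Real.sqrt R - 1| ≤ δ₀ ∧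
    Real.sqrt (∑ i, (z i + x i) ^ 2) ≤ 2 + δ₀ ∧
    ((∀ u : Fin n → ℝ, ∑ i, (u i) ^ 2 = 1 →
        (1 / (m : ℝ)) * ∑ j, (∑ i, a j i * u i) ^ 2 * (∑ i, a j i * z i) ^ 2
          ≥ R * (1 + 2 * (∑ i, u i * zh i) ^ 2 - 2 * ε)) →
     (∀ u : Fin n → ℝ, ∑ i, (u i) ^ 2 = 1 →
        (1 / (m : ℝ)) * ∑ j, (∑ i, a j i * u i) ^ 2 * (∑ i, a j i * x i) ^ 2
          ≤ 1 + 2 * (∑ i, u i * x i) ^ 2 + ε) →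
     ∀ u : Fin n → ℝ, ∑ i, (u i) ^ 2 = 1 →
        (1 / 4) * ((4 / (m : ℝ)) * ∑ j, (∑ i, a j i * u i) ^ 2 *
            (3 * (∑ i, a j i * z i) ^ 2 - (∑ i, a j i * x i) ^ 2))
          ≥ 3 * (1 - δ₀) ^ 2 - 1 - 6 * ((1 + δ₀) ^ 2 + 1) * ε - (2 + δ₀) * δ₀) := by
  set s := Real.sqrt R with hsdef
  have hs0 : 0 ≤ s := Real.sqrt_nonneg R
  have hs2 : s ^ 2 = R := Real.sq_sqrt hR
  set σ := ∑ i, zh i * x i with hσdef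
  -- σ ≤ 1 by Cauchy-Schwarz
  have hσ1 : σ ≤ 1 := by
    have hcs := Finset.sum_mul_sq_le_sq_mul_sq Finset.univ zh x
    rw [hx, hzh] at hcs
    nlinarith [hcs, hσ]
  -- expansion of ‖z - x‖²
  have ezm : ∑ i, (z i - x i) ^ 2 = s ^ 2 - 2 * s * σ + 1 := by
    have : ∀ i, (z i - x i) ^ 2
        = s ^ 2 * (zh i) ^ 2 - 2 * s * (zh i * x i) + (x i) ^ 2 := by
      intro i; rw [hz]; ring
    simp_rw [this, Finset.sum_add_distrib, Finset.sum_sub_distrib, ← Finset.mul_sum,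
      hx, hzh, hσdef]
    ring
  have ezp : ∑ i, (z i + x i) ^ 2 = s ^ 2 + 2 * s * σ + 1 := by
    have : ∀ i, (z i + x i) ^ 2
        = s ^ 2 * (zh i) ^ 2 + 2 * s * (zh i * x i) + (x i) ^ 2 := by
      intro i; rw [hz]; ring
    simp_rw [this, Finset.sum_add_distrib, ← Finset.mul_sum, hx, hzh, hσdef]
    ring
  have hzm0 : 0 ≤ ∑ i, (z i - x i) ^ 2 :=
    Finset.sum_nonneg fun i _ => sq_nonneg _
  have hzm : ∑ i, (z i - x i) ^ 2 ≤ δ₀ ^ 2 := by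
    nlinarith [Real.sq_sqrt hzm0, hdist, Real.sqrt_nonneg (∑ i, (z i - x i) ^ 2)]
  -- |s - 1| ≤ δ₀
  have hsb : (s - 1) ^ 2 ≤ δ₀ ^ 2 := by
    have : s ^ 2 - 2 * s * σ + 1 ≤ δ₀ ^ 2 := ezm ▸ hzm
    nlinarith [mul_nonneg hs0 (sub_nonneg.mpr hσ1)]
  have habs : |s - 1| ≤ δ₀ := by
    rw [abs_le]; constructor <;> nlinarith
  have hslb : 1 - δ₀ ≤ s := by have := abs_le.mp habs; linarith [this.1]
  have hsub : s ≤ 1 + δ₀ := by have := abs_le.mp habs; linarith [this.2]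
  refine ⟨habs, ?_, ?_⟩
  · -- ‖z + x‖ ≤ 2 + δ₀
    have hb : ∑ i, (z i + x i) ^ 2 ≤ (2 + δ₀) ^ 2 := by
      rw [ezp]
      have hσ0 : σ ≤ 1 := hσ1
      nlinarith [mul_nonneg hs0 hσ]
    calc Real.sqrt (∑ i, (z i + x i) ^ 2) ≤ Real.sqrt ((2 + δ₀) ^ 2) :=
          Real.sqrt_le_sqrt hb
      _ = 2 + δ₀ := Real.sqrt_sq (by linarith)
  · intro h1 h2 u hu
    have hA := h1 u hu
    have hB := h2 u hu
    set τ := ∑ i, u i * zh i with hτdef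
    set w := ∑ i, u i * x i with hwdef
    set A := (1 / (m : ℝ)) * ∑ j, (∑ i, a j i * u i) ^ 2 * (∑ i, a j i * z i) ^ 2 with hAdef
    set B := (1 / (m : ℝ)) * ∑ j, (∑ i, a j i * u i) ^ 2 * (∑ i, a j i * x i) ^ 2 with hBdef
    -- the Hessian expression equals 3A - B
    have key : (1 / 4 : ℝ) * ((4 / (m : ℝ)) * ∑ j, (∑ i, a j i * u i) ^ 2 *
        (3 * (∑ i, a j i * z i) ^ 2 - (∑ i, a j i * x i) ^ 2)) = 3 * A - B := by
      rw [hAdef, hBdef]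
      have : ∑ j, (∑ i, a j i * u i) ^ 2 *
          (3 * (∑ i, a j i * z i) ^ 2 - (∑ i, a j i * x i) ^ 2)
          = 3 * (∑ j, (∑ i, a j i * u i) ^ 2 * (∑ i, a j i * z i) ^ 2)
            - ∑ j, (∑ i, a j i * u i) ^ 2 * (∑ i, a j i * x i) ^ 2 := by
        rw [Finset.mul_sum, ← Finset.sum_sub_distrib]
        exact Finset.sum_congr rfl fun j _ => by ring
      rw [this]; ring
    rw [key]
    -- τ² ≤ 1
    have hτ1 : τ ^ 2 ≤ 1 := by
      have hcs := Finset.sum_mul_sq_le_sq_mul_sq Finset.univ u zh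
      rw [hu, hzh] at hcs; simpa using hcs
    -- |w - sτ| ≤ δ₀ : Cauchy-Schwarz with u and x - z
    have hwτ : (w - s * τ) ^ 2 ≤ δ₀ ^ 2 := by
      have hid : w - s * τ = ∑ i, u i * (x i - z i) := by
        rw [hwdef, hτdef, Finset.mul_sum, ← Finset.sum_sub_distrib]
        exact Finset.sum_congr rfl fun i _ => by rw [hz]; ring
      have hcs := Finset.sum_mul_sq_le_sq_mul_sq Finset.univ u (fun i => x i - z i)
      rw [hu] at hcs
      have hsum : ∑ i, (x i - z i) ^ 2 = ∑ i, (z i - x i) ^ 2 :=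
        Finset.sum_congr rfl fun i _ => by ring
      rw [hid]
      calc (∑ i, u i * (x i - z i)) ^ 2 ≤ 1 * ∑ i, (x i - z i) ^ 2 := hcs
        _ = ∑ i, (z i - x i) ^ 2 := by rw [hsum]; ring
        _ ≤ δ₀ ^ 2 := hzm
    -- key bounds
    have L1 : 3 * (1 - δ₀) ^ 2 ≤ 3 * s ^ 2 :=
      scv_aux1 s δ₀ hslb (by linarith)
    have L2 : s ^ 2 * ε ≤ (1 + δ₀) ^ 2 * ε :=
      mul_le_mul_of_nonneg_right (scv_aux2 s δ₀ hs0 hsub) hε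
    have L3 : 6 * (s ^ 2 * τ ^ 2) - 2 * w ^ 2 ≥ -(2 * δ₀ + δ₀ ^ 2) :=
      scv_aux3 s τ w δ₀ hwτ hδ.le (by linarith)
    have hA' : 3 * A ≥ 3 * s ^ 2 + 6 * (s ^ 2 * τ ^ 2) - 6 * (s ^ 2 * ε) := by
      have : R * (1 + 2 * τ ^ 2 - 2 * ε)
          = s ^ 2 + 2 * (s ^ 2 * τ ^ 2) - 2 * (s ^ 2 * ε) := by rw [hs2]; ring
      rw [this] at hA; linarith
    have hB' : B ≤ 1 + 2 * w ^ 2 + ε := hB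
    linarith [hA', hB', L1, L2, L3, hε]
end
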